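/- arXiv:math/0307174 — 6 statements merged into one kernel-verified Lean document; each statement's English description precedes it below -/
import Mathlib

section
/- For every parameter κ ∈ ℂ there exists a continuous curve γ : [0,∞) → ℂ such that Re(γ(t)) → +∞ as t → ∞, limsup_{t→∞} |Im(γ(t))| < ∞, and every point γ(t) is an escaping point of E_κ, i.e. |E_κ^n(γ(t))| → ∞ as n → ∞. -/
/-
Let `L w = log (w - κ)` be the principal inverse branch of `E_κ`. For `s` large, the pullbacks
`L^m (exp^m s)` of the real orbit of `s` stay within distance `1` of `s`, and on the half-plane
`Re w ≥ ‖κ‖ + 2` (which contains them) `L` is a `1/2`-contraction. So they converge uniformly to a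
continuous curve `g` with `E_κ (g s) = g (exp s)`: the orbit of `g s` is `g (exp^n s)`, which stays
within distance `1` of `exp^n s → ∞`.
-/

open Filter Complex

theorem Complex.lipschitzOnWith_log_of_le_re {a : NNReal} (ha : 0 < a) :
    LipschitzOnWith a⁻¹ log {z : ℂ | (a : ℝ) ≤ z.re} := by
  refine (convex_halfSpace_re_ge (a : ℝ)).lipschitzOnWith_of_nnnorm_hasDerivWithin_le
    (f' := fun z => z⁻¹) (fun z hz => ?_) (fun z hz => ?_)
  · exact (hasDerivAt_log (Or.inl (lt_of_lt_of_le (by exact_mod_cast ha) hz))).hasDerivWithinAt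
  · rw [nnnorm_inv]
    exact inv_anti₀ ha (by rw [← NNReal.coe_le_coe, coe_nnnorm]; exact hz.trans (re_le_norm z))

theorem Real.add_natCast_le_iterate_exp (s : ℝ) (n : ℕ) : s + n ≤ Real.exp^[n] s := by
  induction n with
  | zero => simp
  | succ n ih =>
    rw [Function.iterate_succ_apply', Nat.cast_succ]
    linarith [Real.add_one_le_exp (Real.exp^[n] s)]

theorem Complex.sub_le_re_of_norm_sub_ofReal_le {z : ℂ} {s r : ℝ} (h : ‖z - s‖ ≤ r) :
    s - r ≤ z.re := by
  have := (abs_le.mp ((abs_re_le_norm (z - s)).trans h)).1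
  simp only [sub_re, ofReal_re] at this
  linarith

theorem Complex.abs_im_le_of_norm_sub_ofReal_le {z : ℂ} {s r : ℝ} (h : ‖z - s‖ ≤ r) :
    |z.im| ≤ r := by
  simpa using (abs_im_le_norm (z - s)).trans h

namespace EscapingCurve

variable (κ : ℂ)

noncomputable def invBranch (w : ℂ) : ℂ := log (w - κ)

-- large enough that `exp s ≥ 2 * (‖κ‖ + 1)` and `exp s - 1 ≥ ‖κ‖ + 2` for `s ≥ escapeRadius κ`
noncomputable def escapeRadius : ℝ := 2 * ‖κ‖ + 3

noncomputable def approx : ℕ → ℝ → ℂ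
  | 0, s => s
  | m + 1, s => invBranch κ (approx m (Real.exp s))

noncomputable def curve (s : ℝ) : ℂ := limUnder atTop fun m => approx κ m s

variable {κ}

theorem sub_mem_slitPlane {w : ℂ} (hw : ‖κ‖ < w.re) : w - κ ∈ slitPlane :=
  Or.inl (by rw [sub_re]; linarith [re_le_norm κ])

theorem exp_invBranch_add {w : ℂ} (hw : ‖κ‖ < w.re) : exp (invBranch κ w) + κ = w := by
  rw [invBranch, exp_log (slitPlane_ne_zero (sub_mem_slitPlane hw)), sub_add_cancel]

theorem dist_invBranch_le {w w' : ℂ} (hw : ‖κ‖ + 2 ≤ w.re) (hw' : ‖κ‖ + 2 ≤ w'.re) :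
    dist (invBranch κ w) (invBranch κ w') ≤ 2⁻¹ * dist w w' := by
  have h2 : ∀ {v : ℂ}, ‖κ‖ + 2 ≤ v.re → ((2 : NNReal) : ℝ) ≤ (v - κ).re := fun hv => by
    rw [sub_re]; push_cast; linarith [re_le_norm κ]
  simpa [invBranch] using
    (lipschitzOnWith_log_of_le_re two_pos).dist_le_mul _ (h2 hw) _ (h2 hw')

theorem escapeRadius_add_one_le_exp {s : ℝ} (hs : escapeRadius κ ≤ s) :
    escapeRadius κ + 1 ≤ Real.exp s := by
  linarith [Real.add_one_le_exp s]

theorem escapeRadius_le_exp {s : ℝ} (hs : escapeRadius κ ≤ s) : escapeRadius κ ≤ Real.exp s := by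
  linarith [escapeRadius_add_one_le_exp hs]

theorem escapeRadius_le_iterate_exp (n : ℕ) {s : ℝ} (hs : escapeRadius κ ≤ s) :
    escapeRadius κ ≤ Real.exp^[n] s := by
  linarith [Real.add_natCast_le_iterate_exp s n, (Nat.cast_nonneg n : (0 : ℝ) ≤ n)]

theorem le_re_of_norm_sub_exp_le {s : ℝ} {z : ℂ} (hs : escapeRadius κ ≤ s)
    (hz : ‖z - Real.exp s‖ ≤ 1) : ‖κ‖ + 2 ≤ z.re := by
  have := escapeRadius_add_one_le_exp hs
  have := sub_le_re_of_norm_sub_ofReal_le hz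
  unfold escapeRadius at *
  linarith [norm_nonneg κ]

theorem norm_invBranch_sub_le {s : ℝ} {u : ℂ} (hs : escapeRadius κ ≤ s)
    (hu : ‖u - Real.exp s‖ ≤ 1) : ‖invBranch κ u - s‖ ≤ 1 := by
  have hexp := escapeRadius_add_one_le_exp hs
  have hpos := Real.exp_pos s
  set z : ℂ := (u - Real.exp s - κ) / Real.exp s
  have hz : ‖z‖ ≤ 1 / 2 := by
    rw [norm_div, norm_real, Real.norm_of_nonneg hpos.le, div_le_iff₀ hpos]
    unfold escapeRadius at hexp
    linarith [norm_sub_le (u - Real.exp s) κ]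
  have hz1 : 1 + z ≠ 0 := fun h => by
    rw [eq_neg_of_add_eq_zero_right h, norm_neg, norm_one] at hz; norm_num at hz
  have hsplit : u - κ = Real.exp s * (1 + z) := by
    simp only [z]; field_simp; ring
  calc ‖invBranch κ u - s‖ = ‖log (1 + z)‖ := by
        rw [invBranch, hsplit, log_ofReal_mul hpos hz1, Real.log_exp, add_sub_cancel_left]
    _ ≤ 3 / 2 * ‖z‖ := norm_log_one_add_half_le_self hz
    _ ≤ 1 := by linarith

theorem norm_approx_sub_le (m : ℕ) {s : ℝ} (hs : escapeRadius κ ≤ s) :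
    ‖approx κ m s - s‖ ≤ 1 := by
  induction m generalizing s with
  | zero => simp [approx]
  | succ m ih => exact norm_invBranch_sub_le hs (ih (escapeRadius_le_exp hs))

theorem le_re_approx_exp (m : ℕ) {s : ℝ} (hs : escapeRadius κ ≤ s) :
    ‖κ‖ + 2 ≤ (approx κ m (Real.exp s)).re :=
  le_re_of_norm_sub_exp_le hs (norm_approx_sub_le m (escapeRadius_le_exp hs))

theorem dist_approx_succ_le (m : ℕ) {s : ℝ} (hs : escapeRadius κ ≤ s) :
    dist (approx κ m s) (approx κ (m + 1) s) ≤ (1 / 2) ^ m := by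
  induction m generalizing s with
  | zero =>
    rw [dist_comm, dist_eq, pow_zero]
    exact norm_invBranch_sub_le hs (by simp [approx])
  | succ m ih =>
    calc dist (approx κ (m + 1) s) (approx κ (m + 2) s)
        ≤ 2⁻¹ * dist (approx κ m (Real.exp s)) (approx κ (m + 1) (Real.exp s)) :=
          dist_invBranch_le (le_re_approx_exp m hs) (le_re_approx_exp (m + 1) hs)
      _ ≤ 2⁻¹ * (1 / 2) ^ m := by gcongr; exact ih (escapeRadius_le_exp hs)
      _ = (1 / 2) ^ (m + 1) := by ring

theorem tendsto_approx {s : ℝ} (hs : escapeRadius κ ≤ s) :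
    Tendsto (approx κ · s) atTop (nhds (curve κ s)) :=
  (cauchySeq_of_le_geometric (1 / 2) 1 (by norm_num)
    (fun m => by simpa only [one_mul] using dist_approx_succ_le m hs)).tendsto_limUnder

theorem dist_approx_curve_le (m : ℕ) {s : ℝ} (hs : escapeRadius κ ≤ s) :
    dist (approx κ m s) (curve κ s) ≤ 2 * (1 / 2) ^ m := by
  convert dist_le_of_le_geometric_of_tendsto (1 / 2) 1 (by norm_num)
    (fun m => by simpa only [one_mul] using dist_approx_succ_le m hs) (tendsto_approx hs) m
    using 1
  ring

theorem norm_curve_sub_le {s : ℝ} (hs : escapeRadius κ ≤ s) : ‖curve κ s - s‖ ≤ 1 :=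
  le_of_tendsto ((tendsto_approx hs).sub_const (s : ℂ)).norm
    (Eventually.of_forall fun m => norm_approx_sub_le m hs)

theorem le_re_curve_exp {s : ℝ} (hs : escapeRadius κ ≤ s) :
    ‖κ‖ + 2 ≤ (curve κ (Real.exp s)).re :=
  le_re_of_norm_sub_exp_le hs (norm_curve_sub_le (escapeRadius_le_exp hs))

theorem tendstoUniformlyOn_approx :
    TendstoUniformlyOn (approx κ) (curve κ) atTop (Set.Ici (escapeRadius κ)) := by
  refine Metric.tendstoUniformlyOn_iff.mpr fun ε hε => ?_
  have hbound : Tendsto (fun m : ℕ => 2 * (1 / 2 : ℝ) ^ m) atTop (nhds 0) := by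
    simpa using (tendsto_pow_atTop_nhds_zero_of_lt_one (by norm_num : (0 : ℝ) ≤ 1 / 2)
      one_half_lt_one).const_mul 2
  filter_upwards [hbound.eventually (gt_mem_nhds hε)] with m hm s hs
  rw [dist_comm]
  exact (dist_approx_curve_le m hs).trans_lt hm

theorem continuousOn_approx (m : ℕ) : ContinuousOn (approx κ m) (Set.Ici (escapeRadius κ)) := by
  induction m with
  | zero => exact continuous_ofReal.continuousOn
  | succ m ih =>
    refine ContinuousOn.clog ?_ fun s hs => sub_mem_slitPlane ?_
    · exact (ih.comp Real.continuous_exp.continuousOn fun s hs => escapeRadius_le_exp hs).sub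
        continuousOn_const
    · linarith [le_re_approx_exp m (Set.mem_Ici.mp hs)]

theorem continuousOn_curve : ContinuousOn (curve κ) (Set.Ici (escapeRadius κ)) :=
  tendstoUniformlyOn_approx.continuousOn (Frequently.of_forall continuousOn_approx)

theorem curve_eq_invBranch {s : ℝ} (hs : escapeRadius κ ≤ s) :
    curve κ s = invBranch κ (curve κ (Real.exp s)) := by
  have hre : ‖κ‖ < (curve κ (Real.exp s)).re := by linarith [le_re_curve_exp hs]
  have hcont : ContinuousAt (invBranch κ) (curve κ (Real.exp s)) :=
    (continuousAt_id.sub continuousAt_const).clog (sub_mem_slitPlane hre)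
  have hshift : Tendsto (fun m => approx κ (m + 1) s) atTop (nhds (curve κ s)) :=
    (tendsto_approx hs).comp (tendsto_add_atTop_nat 1)
  have hstep : Tendsto (fun m => approx κ (m + 1) s) atTop
      (nhds (invBranch κ (curve κ (Real.exp s)))) :=
    hcont.tendsto.comp (tendsto_approx (escapeRadius_le_exp hs))
  exact tendsto_nhds_unique hshift hstep

theorem exp_curve_add {s : ℝ} (hs : escapeRadius κ ≤ s) :
    exp (curve κ s) + κ = curve κ (Real.exp s) := by
  have hre := le_re_curve_exp hs
  rw [curve_eq_invBranch hs, exp_invBranch_add (by linarith)]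

theorem iterate_curve (n : ℕ) {s : ℝ} (hs : escapeRadius κ ≤ s) :
    (fun z => exp z + κ)^[n] (curve κ s) = curve κ (Real.exp^[n] s) := by
  induction n with
  | zero => rfl
  | succ n ih =>
    rw [Function.iterate_succ_apply', ih, Function.iterate_succ_apply',
      exp_curve_add (escapeRadius_le_iterate_exp n hs)]

end EscapingCurve

open EscapingCurve in
/-- For every parameter `κ ∈ ℂ` there is a continuous curve `γ : [0,∞) → ℂ` whose
real part tends to `+∞`, whose imaginary part has finite `limsup` in absolute value
(i.e. is eventually bounded), and all of whose points are escaping points of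
`E_κ(z) = exp z + κ`. -/
theorem exponential_has_escaping_curve (κ : ℂ) :
    ∃ γ : ℝ → ℂ, ContinuousOn γ (Set.Ici 0) ∧
      Tendsto (fun t => (γ t).re) atTop atTop ∧
      (∃ C : ℝ, ∀ᶠ t in atTop, |(γ t).im| ≤ C) ∧
      ∀ t ∈ Set.Ici (0 : ℝ),
        Tendsto (fun n => ‖(fun z => Complex.exp z + κ)^[n] (γ t)‖)
          atTop atTop := by
  set R := escapeRadius κ
  have hR (t : ℝ) : R ≤ max t R := le_max_right t R
  refine ⟨fun t => curve κ (max t R), ?_, ?_, ⟨1, Eventually.of_forall fun t => ?_⟩, ?_⟩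
  · exact (continuousOn_curve.comp_continuous (continuous_id.max continuous_const) hR).continuousOn
  · refine tendsto_atTop_mono (fun t => ?_) (tendsto_atTop_add_const_right _ (-1) tendsto_id)
    show t + -1 ≤ (curve κ (max t R)).re
    linarith [sub_le_re_of_norm_sub_ofReal_le (norm_curve_sub_le (hR t)), le_max_left t R]
  · exact abs_im_le_of_norm_sub_ofReal_le (norm_curve_sub_le (hR t))
  · intro t _
    set s := max t R
    refine tendsto_atTop_mono (fun n => ?_)
      (tendsto_atTop_add_const_right _ (s - 1) tendsto_natCast_atTop_atTop)
    rw [iterate_curve n (hR t)]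
    linarith [sub_le_re_of_norm_sub_ofReal_le
        (norm_curve_sub_le (escapeRadius_le_iterate_exp n (hR t))),
      re_le_norm (curve κ (Real.exp^[n] s)), Real.add_natCast_le_iterate_exp s n]
end

section
/- Let κ ∈ ℂ, S > 0, and let γ : [0,∞) → ℂ be continuous with Re(γ(t)) → +∞ as t → ∞ and |Im(γ(t))| ≤ S for all t. Suppose η : [0,∞) → ℂ is a continuous lift of γ under E_κ, i.e. exp(η(t)) + κ = γ(t) for all t ≥ 0. Then Im(η) is bounded: there exists M > 0 with |Im(η(t))| ≤ M for all t ≥ 0. (Each such lift is asymptotic to a horizontal line {Im z = 2kπ} for some k ∈ ℤ, hence has bounded imaginary part.) -/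
open Filter Complex

/-- Every closed interval of length `π` contains a zero of `cos`. -/
lemma exists_cos_zero_in_Icc (u : ℝ) : ∃ y ∈ Set.Icc u (u + Real.pi), Real.cos y = 0 := by
  have hπ : (0:ℝ) < Real.pi := Real.pi_pos
  set k : ℤ := ⌈(u - Real.pi/2) / Real.pi⌉ with hk
  refine ⟨(2*k+1) * Real.pi / 2, ⟨?_, ?_⟩, Real.cos_eq_zero_iff.2 ⟨k, rfl⟩⟩
  · have h1 : (u - Real.pi/2) / Real.pi ≤ (k:ℝ) := Int.le_ceil _
    have := (div_le_iff₀ hπ).1 h1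
    nlinarith
  · have h2 : (k:ℝ) < (u - Real.pi/2) / Real.pi + 1 := Int.ceil_lt_add_one _
    have := (lt_div_iff₀ hπ).1 (by linarith : (k:ℝ) - 1 < (u - Real.pi/2) / Real.pi)
    nlinarith

/-- Any continuous lift under `E_κ(z) = exp z + κ` of a continuous curve whose real part
tends to `+∞` and whose imaginary part is bounded by `S` has bounded imaginary part. -/
theorem lift_has_bounded_imaginary_part (κ : ℂ) (S : ℝ) (hS : 0 < S)
    (γ η : ℝ → ℂ)
    (hγc : ContinuousOn γ (Set.Ici 0))
    (hγre : Tendsto (fun t => (γ t).re) atTop atTop)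
    (hγim : ∀ t ∈ Set.Ici (0 : ℝ), |(γ t).im| ≤ S)
    (hηc : ContinuousOn η (Set.Ici 0))
    (hlift : ∀ t ∈ Set.Ici (0 : ℝ), Complex.exp (η t) + κ = γ t) :
    ∃ M > 0, ∀ t ∈ Set.Ici (0 : ℝ), |(η t).im| ≤ M := by
  -- pick T ≥ 0 beyond which Re (γ t) > Re κ
  obtain ⟨T₀, hT₀⟩ := (hγre.eventually (eventually_gt_atTop (κ.re))).exists_forall_of_atTop
  set T : ℝ := max T₀ 0 with hT
  have hT0 : (0:ℝ) ≤ T := le_max_right _ _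
  set f : ℝ → ℝ := fun t => (η t).im with hf
  have hfc : ContinuousOn f (Set.Ici 0) := Complex.continuous_im.comp_continuousOn hηc
  -- cos (f t) > 0 for t ≥ T
  have hcos : ∀ t ∈ Set.Ici T, 0 < Real.cos (f t) := by
    intro t ht
    have ht0 : t ∈ Set.Ici (0:ℝ) := le_trans hT0 ht
    have h1 : Complex.exp (η t) = γ t - κ := by
      have := hlift t ht0; linear_combination this
    have h2 : Real.exp (η t).re * Real.cos (η t).im = (γ t).re - κ.re := by
      have := congrArg Complex.re h1
      simpa [Complex.exp_re] using this
    have h3 : (0:ℝ) < (γ t).re - κ.re := by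
      have := hT₀ t (le_trans (le_max_left _ _) ht); linarith
    nlinarith [Real.exp_pos (η t).re]
  -- on [T, ∞), f stays within π of f T
  have hconn : ∀ t ∈ Set.Ici T, |f t - f T| < Real.pi := by
    intro t ht
    by_contra hcon
    push_neg at hcon
    have hIciT : Set.Ici T ⊆ Set.Ici (0:ℝ) := fun x hx => le_trans hT0 hx
    have hC : IsPreconnected (f '' Set.Ici T) :=
      (isPreconnected_Ici).image f (hfc.mono hIciT)
    have hord : (f '' Set.Ici T).OrdConnected := hC.ordConnected
    set u := min (f T) (f t) with hu
    set v := max (f T) (f t) with hv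
    have huv : u + Real.pi ≤ v := by
      have h1 : v - u = |f t - f T| := max_sub_min_eq_abs (f T) (f t)
      linarith
    obtain ⟨y, hy, hy0⟩ := exists_cos_zero_in_Icc u
    have hyC : y ∈ f '' Set.Ici T := by
      have h1 : f T ∈ f '' Set.Ici T := ⟨T, le_refl T, rfl⟩
      have h2 : f t ∈ f '' Set.Ici T := ⟨t, ht, rfl⟩
      have : Set.Icc u v ⊆ f '' Set.Ici T := by
        rcases le_total (f T) (f t) with h | h
        · simpa [hu, hv, min_eq_left h, max_eq_right h] using hord.out h1 h2
        · simpa [hu, hv, min_eq_right h, max_eq_left h] using hord.out h2 h1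
      exact this ⟨hy.1, le_trans hy.2 huv⟩
    obtain ⟨s, hs, hsy⟩ := hyC
    have := hcos s hs
    rw [hsy, hy0] at this
    exact lt_irrefl 0 this
  -- bound on [0, T]
  obtain ⟨M₁, hM₁⟩ := (isCompact_Icc (a := (0:ℝ)) (b := T)).exists_bound_of_continuousOn
    (hfc.mono Set.Icc_subset_Ici_self)
  refine ⟨max M₁ (|f T| + Real.pi) + 1, by positivity, ?_⟩
  intro t ht
  rcases le_total t T with h | h
  · have := hM₁ t ⟨ht, h⟩
    simp only [Real.norm_eq_abs] at this
    exact this.trans (by linarith [le_max_left M₁ (|f T| + Real.pi)])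
  · have h1 := hconn t h
    have : |f t| ≤ |f T| + Real.pi := by
      have := abs_sub_abs_le_abs_sub (f t) (f T)
      linarith
    linarith [le_max_right M₁ (|f T| + Real.pi)]
end

section
/- Let κ ∈ ℂ, S > 0, and let R > 1 satisfy exp(R) ≥ exp(R−1) + S + 1 + |κ|. Then for every z ∈ ℂ with r := Re(z) ≥ R and |Im(E_κ(z))| < S, one has |Re(E_κ(z))| > exp(r−1) + 1. -/
open Complex

/-! Since `|Re w| ≥ ‖w‖ - |Im w|` and `‖exp z + κ‖ ≥ exp (Re z) - ‖κ‖`, it suffices that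
`exp r ≥ exp (r - 1) + S + 1 + ‖κ‖` for `r = Re z`; this holds for all `r ≥ R` because
`exp r - exp (r - 1) = (e - 1) exp (r - 1)` is increasing. -/

theorem Real.monotone_exp_sub_exp_sub_one :
    Monotone fun r : ℝ => Real.exp r - Real.exp (r - 1) := by
  intro r s hrs
  have hfactor (t : ℝ) : Real.exp t - Real.exp (t - 1) = (Real.exp 1 - 1) * Real.exp (t - 1) := by
    rw [mul_sub_right_distrib, one_mul, ← Real.exp_add, add_sub_cancel]
  simp only [hfactor]
  gcongr
  linarith [Real.add_one_le_exp (1 : ℝ)]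

theorem Complex.exp_re_le_norm_exp_add (z κ : ℂ) : Real.exp z.re ≤ ‖exp z + κ‖ + ‖κ‖ := by
  rw [← Complex.norm_exp]
  simpa using norm_sub_le (exp z + κ) κ

theorem re_image_large_general (κ : ℂ) (S R : ℝ)
    (hRineq : Real.exp R ≥ Real.exp (R - 1) + S + 1 + ‖κ‖) :
    ∀ z : ℂ, R ≤ z.re → |(Complex.exp z + κ).im| < S →
      |(Complex.exp z + κ).re| > Real.exp (z.re - 1) + 1 := by
  intro z hz him
  have hgap : Real.exp R - Real.exp (R - 1) ≤ Real.exp z.re - Real.exp (z.re - 1) :=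
    Real.monotone_exp_sub_exp_sub_one hz
  have hnorm := Complex.norm_le_abs_re_add_abs_im (Complex.exp z + κ)
  have hexp := Complex.exp_re_le_norm_exp_add z κ
  linarith

/-- If `R > 1` satisfies `exp R ≥ exp (R-1) + S + 1 + |κ|`, then any `z` with
`Re z ≥ R` and `|Im (E_κ z)| < S` satisfies `|Re (E_κ z)| > exp (Re z - 1) + 1`. -/
theorem re_image_large (κ : ℂ) (S R : ℝ) (hS : 0 < S) (hR : 1 < R)
    (hRineq : Real.exp R ≥ Real.exp (R - 1) + S + 1 + ‖κ‖) :
    ∀ z : ℂ, R ≤ z.re → |(Complex.exp z + κ).im| < S →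
      |(Complex.exp z + κ).re| > Real.exp (z.re - 1) + 1 :=
  re_image_large_general κ S R hRineq
end

section
/- Let κ ∈ ℂ, δ > 0, S > 0, and let R > 1 satisfy exp(R−1) > −log δ and exp(R) ≥ exp(R−1) + S + 1 + |κ|. Suppose z ∈ ℂ satisfies Re(z) ≥ R and, for all n ≥ 1, |Im(E_κ^n(z))| < S and Re(E_κ^n(z)) > log δ. Then for all n ≥ 1, Re(E_κ^n(z)) − 1 > exp^n(Re(z) − 1), where exp^n denotes the n-th iterate of the real exponential function. -/
/-!
Write `u = exp w + κ`. Then `‖u‖ ≥ exp (Re w) - ‖κ‖`, so a bounded imaginary part forces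
`|Re u| > exp (Re w) - ‖κ‖ - S`. Since `x ↦ exp x - exp (x - 1)` is increasing, the condition on
`exp R` turns this into `|Re u| > exp (Re w - 1) + 1` once `Re w ≥ R`, and `Re u > log δ` together
with `exp (R - 1) > -log δ` excludes the negative sign. Hence `Re (E_κ w) - 1 > exp (Re w - 1)`
whenever `Re w ≥ R`, and since `exp^[n] x ≥ x` the bound propagates along the orbit.
-/

open Complex

namespace Real

theorem self_le_iterate_exp (x : ℝ) (n : ℕ) : x ≤ exp^[n] x :=
  Function.id_le_iterate_of_id_le (fun y => show y ≤ exp y by linarith [add_one_le_exp y]) n x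

theorem exp_sub_exp_sub_one_le_of_le {x y : ℝ} (h : x ≤ y) :
    exp x - exp (x - 1) ≤ exp y - exp (y - 1) := by
  have factor : ∀ t, exp t - exp (t - 1) = exp t * (1 - exp (-1)) := fun t => by
    rw [sub_eq_add_neg t 1, exp_add]; ring
  rw [factor, factor]
  exact mul_le_mul_of_nonneg_right (exp_le_exp.2 h) (sub_nonneg.2 (exp_le_one_iff.2 (by norm_num)))

end Real

namespace Complex

theorem norm_sub_abs_im_le_abs_re (u : ℂ) : ‖u‖ - |u.im| ≤ |u.re| := by
  linarith [norm_le_abs_re_add_abs_im u]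

theorem exp_re_sub_norm_le_norm_exp_add (w κ : ℂ) : Real.exp w.re - ‖κ‖ ≤ ‖exp w + κ‖ := by
  simpa only [norm_exp] using norm_sub_le_norm_add (exp w) κ

variable {κ : ℂ} {L S R : ℝ}

theorem exp_re_sub_one_lt_re_exp_add_sub_one {w : ℂ}
    (hR1 : Real.exp (R - 1) > -L) (hR2 : Real.exp R ≥ Real.exp (R - 1) + S + 1 + ‖κ‖)
    (hw : R ≤ w.re) (him : |(exp w + κ).im| < S) (hre : L < (exp w + κ).re) :
    Real.exp (w.re - 1) < (exp w + κ).re - 1 := by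
  set u := exp w + κ
  have habs_re : Real.exp w.re - ‖κ‖ - S < |u.re| := by
    linarith [exp_re_sub_norm_le_norm_exp_add w κ, norm_sub_abs_im_le_abs_re u]
  have hgap := Real.exp_sub_exp_sub_one_le_of_le hw
  have hexp_mono : Real.exp (R - 1) ≤ Real.exp (w.re - 1) := Real.exp_le_exp.2 (by linarith)
  have hre_pos : 0 < u.re := by
    by_contra! hneg
    linarith [abs_of_nonpos hneg]
  linarith [abs_of_pos hre_pos]

variable {z : ℂ}

theorem iterate_succ_exp_lt_re_iterate_succ_sub_one
    (hR1 : Real.exp (R - 1) > -L) (hR2 : Real.exp R ≥ Real.exp (R - 1) + S + 1 + ‖κ‖)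
    (hz : R ≤ z.re)
    (him : ∀ n : ℕ, 1 ≤ n → |((fun w => exp w + κ)^[n] z).im| < S)
    (hre : ∀ n : ℕ, 1 ≤ n → L < ((fun w => exp w + κ)^[n] z).re) {n : ℕ}
    (hn : Real.exp^[n] (z.re - 1) ≤ ((fun w => exp w + κ)^[n] z).re - 1) :
    Real.exp^[n + 1] (z.re - 1) < ((fun w => exp w + κ)^[n + 1] z).re - 1 := by
  have hRn : R ≤ ((fun w => exp w + κ)^[n] z).re := by
    linarith [Real.self_le_iterate_exp (z.re - 1) n]
  rw [Function.iterate_succ_apply', Function.iterate_succ_apply']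
  refine (Real.exp_le_exp.2 hn).trans_lt (exp_re_sub_one_lt_re_exp_add_sub_one hR1 hR2 hRn ?_ ?_)
  · simpa only [Function.iterate_succ_apply'] using him (n + 1) n.succ_pos
  · simpa only [Function.iterate_succ_apply'] using hre (n + 1) n.succ_pos

theorem iterate_exp_le_re_iterate_sub_one
    (hR1 : Real.exp (R - 1) > -L) (hR2 : Real.exp R ≥ Real.exp (R - 1) + S + 1 + ‖κ‖)
    (hz : R ≤ z.re)
    (him : ∀ n : ℕ, 1 ≤ n → |((fun w => exp w + κ)^[n] z).im| < S)
    (hre : ∀ n : ℕ, 1 ≤ n → L < ((fun w => exp w + κ)^[n] z).re) (n : ℕ) :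
    Real.exp^[n] (z.re - 1) ≤ ((fun w => exp w + κ)^[n] z).re - 1 := by
  induction n with
  | zero => simp
  | succ n ih => exact (iterate_succ_exp_lt_re_iterate_succ_sub_one hR1 hR2 hz him hre ih).le

end Complex

theorem orbit_re_grows_iterated_exp_general (κ : ℂ) (δ S R : ℝ)
    (hR1 : Real.exp (R - 1) > -Real.log δ)
    (hR2 : Real.exp R ≥ Real.exp (R - 1) + S + 1 + ‖κ‖)
    (z : ℂ) (hz : R ≤ z.re)
    (him : ∀ n : ℕ, 1 ≤ n → |((fun w => Complex.exp w + κ)^[n] z).im| < S)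
    (hre : ∀ n : ℕ, 1 ≤ n → ((fun w => Complex.exp w + κ)^[n] z).re > Real.log δ) :
    ∀ n : ℕ, 1 ≤ n →
      ((fun w => Complex.exp w + κ)^[n] z).re - 1 > Real.exp^[n] (z.re - 1) := by
  rintro (_ | m) hm
  · omega
  exact iterate_succ_exp_lt_re_iterate_succ_sub_one hR1 hR2 hz him hre
    (iterate_exp_le_re_iterate_sub_one hR1 hR2 hz him hre m)

/-- Under the conditions of the paper's final proof, the real parts of the orbit of `z`
under `E_κ(w) = exp w + κ` grow at least like iterated real exponentials:
`Re (E_κ^[n] z) - 1 > exp^[n] (Re z - 1)` for all `n ≥ 1`. -/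
theorem orbit_re_grows_iterated_exp (κ : ℂ) (δ S R : ℝ) (hδ : 0 < δ) (hS : 0 < S)
    (hR : 1 < R)
    (hR1 : Real.exp (R - 1) > -Real.log δ)
    (hR2 : Real.exp R ≥ Real.exp (R - 1) + S + 1 + ‖κ‖)
    (z : ℂ) (hz : R ≤ z.re)
    (him : ∀ n : ℕ, 1 ≤ n → |((fun w => Complex.exp w + κ)^[n] z).im| < S)
    (hre : ∀ n : ℕ, 1 ≤ n → ((fun w => Complex.exp w + κ)^[n] z).re > Real.log δ) :
    ∀ n : ℕ, 1 ≤ n →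
      ((fun w => Complex.exp w + κ)^[n] z).re - 1 > Real.exp^[n] (z.re - 1) :=
  orbit_re_grows_iterated_exp_general κ δ S R hR1 hR2 z hz him hre
end

section
/- Let κ ∈ ℂ, δ > 0, S > 0, and let R > 1 satisfy exp(R−1) > −log δ and exp(R) ≥ exp(R−1) + S + 1 + |κ|. Suppose z ∈ ℂ satisfies Re(z) ≥ R and, for all n ≥ 1, |Im(E_κ^n(z))| < S and Re(E_κ^n(z)) > log δ. Then z is an escaping point of E_κ; in fact Re(E_κ^n(z)) → +∞ and |E_κ^n(z)| → ∞ as n → ∞. -/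
/-!
Along the orbit the real parts grow by at least one per step. If `Re w = x ≥ R`, then
`|exp w + κ| ≥ eˣ - |κ|`, and since the imaginary part of the image is smaller than `S`, its
real part has absolute value greater than `eˣ - |κ| - S ≥ x + 1 + (e^(R-1) - R)`. A negative
real part would then lie below `-e^(R-1) < log δ`, so the real part is positive and exceeds
`x + 1`.
-/

open Filter Complex

lemma Real.exp_sub_self_le_exp_sub_self {R x : ℝ} (hR : 0 ≤ R) (hx : R ≤ x) :
    Real.exp R - R ≤ Real.exp x - x := by
  have hsplit : Real.exp x = Real.exp R * Real.exp (x - R) := by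
    rw [← Real.exp_add, add_sub_cancel]
  have hlin : x - R + 1 ≤ Real.exp (x - R) := Real.add_one_le_exp _
  have hexpR : 1 ≤ Real.exp R := Real.one_le_exp hR
  nlinarith

lemma Complex.exp_re_sub_norm_le_norm_exp_add_s6 (w κ : ℂ) :
    Real.exp w.re - ‖κ‖ ≤ ‖exp w + κ‖ := by
  simpa [Complex.norm_exp] using norm_sub_norm_le (exp w) (-κ)

lemma Complex.sub_lt_re_of_le_norm {u : ℂ} {c S : ℝ} (hc : c ≤ ‖u‖) (him : |u.im| < S)
    (hre : S - c ≤ u.re) : c - S < u.re := by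
  have hnorm : ‖u‖ ≤ |u.re| + |u.im| := Complex.norm_le_abs_re_add_abs_im u
  rcases abs_cases u.re with ⟨habs, _⟩ | ⟨habs, _⟩ <;> linarith

lemma re_add_one_le_re_exp_add {κ w : ℂ} {δ S R : ℝ} (hR : 1 < R)
    (hR1 : Real.exp (R - 1) > -Real.log δ)
    (hR2 : Real.exp R ≥ Real.exp (R - 1) + S + 1 + ‖κ‖)
    (hw : R ≤ w.re) (him : |(exp w + κ).im| < S) (hre : (exp w + κ).re > Real.log δ) :
    w.re + 1 ≤ (exp w + κ).re := by
  have hgrowth := Real.exp_sub_self_le_exp_sub_self (by linarith) hw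
  have hR_le : R ≤ Real.exp (R - 1) := by linarith [Real.add_one_le_exp (R - 1)]
  have hgap : w.re + 1 + (Real.exp (R - 1) - R) ≤ Real.exp w.re - ‖κ‖ - S := by linarith
  have hre_lower := Complex.sub_lt_re_of_le_norm (Complex.exp_re_sub_norm_le_norm_exp_add_s6 w κ) him
    (by linarith)
  linarith

lemma tendsto_atTop_of_add_one_le_succ {a : ℕ → ℝ} {R : ℝ} (h0 : R ≤ a 0)
    (hstep : ∀ n, R ≤ a n → a n + 1 ≤ a (n + 1)) : Tendsto a atTop atTop := by
  have hlower : ∀ n : ℕ, R + n ≤ a n := by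
    intro n
    induction n with
    | zero => simpa using h0
    | succ n ih =>
      have hn : (0 : ℝ) ≤ n := n.cast_nonneg
      push_cast
      linarith [hstep n (by linarith)]
  exact tendsto_atTop_mono hlower (tendsto_atTop_add_const_left _ R tendsto_natCast_atTop_atTop)

theorem orbit_escapes_general (κ : ℂ) (δ S R : ℝ)
    (hR : 1 < R)
    (hR1 : Real.exp (R - 1) > -Real.log δ)
    (hR2 : Real.exp R ≥ Real.exp (R - 1) + S + 1 + ‖κ‖)
    (z : ℂ) (hz : R ≤ z.re)
    (him : ∀ n : ℕ, 1 ≤ n → |((fun w => Complex.exp w + κ)^[n] z).im| < S)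
    (hre : ∀ n : ℕ, 1 ≤ n → ((fun w => Complex.exp w + κ)^[n] z).re > Real.log δ) :
    Tendsto (fun n => ((fun w => Complex.exp w + κ)^[n] z).re) atTop atTop ∧
      Tendsto (fun n => ‖(fun w => Complex.exp w + κ)^[n] z‖)
        atTop atTop := by
  have hre_tendsto : Tendsto (fun n => ((fun w => exp w + κ)^[n] z).re) atTop atTop := by
    refine tendsto_atTop_of_add_one_le_succ hz fun n hn => ?_
    have him' := him (n + 1) n.succ_pos
    have hre' := hre (n + 1) n.succ_pos
    rw [Function.iterate_succ_apply'] at him' hre' ⊢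
    exact re_add_one_le_re_exp_add hR hR1 hR2 hn him' hre'
  exact ⟨hre_tendsto, tendsto_atTop_mono (fun n => Complex.re_le_norm _) hre_tendsto⟩

/-- Under the conditions of the paper's final proof, the point `z` is an escaping point
of `E_κ(w) = exp w + κ`: indeed `Re (E_κ^[n] z) → +∞` and `|E_κ^[n] z| → ∞`. -/
theorem orbit_escapes (κ : ℂ) (δ S R : ℝ) (hδ : 0 < δ) (hS : 0 < S)
    (hR : 1 < R)
    (hR1 : Real.exp (R - 1) > -Real.log δ)
    (hR2 : Real.exp R ≥ Real.exp (R - 1) + S + 1 + ‖κ‖)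
    (z : ℂ) (hz : R ≤ z.re)
    (him : ∀ n : ℕ, 1 ≤ n → |((fun w => Complex.exp w + κ)^[n] z).im| < S)
    (hre : ∀ n : ℕ, 1 ≤ n → ((fun w => Complex.exp w + κ)^[n] z).re > Real.log δ) :
    Tendsto (fun n => ((fun w => Complex.exp w + κ)^[n] z).re) atTop atTop ∧
      Tendsto (fun n => ‖(fun w => Complex.exp w + κ)^[n] z‖)
        atTop atTop :=
  orbit_escapes_general κ δ S R hR hR1 hR2 z hz him hre
end

section
/- Let κ ∈ ℂ, δ > 0, and let U ⊆ ℂ be a nonempty connected set such that E_κ^p(U) = U for some integer p ≥ 1. Suppose there is a continuous curve g : [0,∞) → ℂ with |g(0) − κ| ≤ δ, Re(g(t)) → +∞ as t → ∞, and sup_t |Im(g(t))| < ∞, such that for every j ≥ 0 the set E_κ^j(U) is disjoint from both the closed disk {w : |w − κ| ≤ δ} and the curve g([0,∞)). Then for every j ≥ 0 the set E_κ^j(U) has bounded imaginary part, and moreover there exists a single S > 0 with |Im(z)| < S for all j ≥ 0 and all z ∈ E_κ^j(U). -/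
/-!
Every forward image `Vⱼ = E_κ^j(U)` is mapped by `E_κ` into the complement of the disk `D` and of
the curve `Γ = g([0,∞))`, so it lies in the open set `O = E_κ⁻¹(ℂ ∖ (D ∪ Γ))`, where `Re > log δ`.
After its last exit from `D`, `g - κ` has a continuous logarithm `ℓ`: it starts on the line
`Re = log δ`, tends to `Re = +∞` and stays in a horizontal strip of some width `2A`. As
`exp (ℓ + 2πin) + κ ∈ Γ`, the set `O` avoids every translate `ℓ + 2πin`, and a path in `O` whose
imaginary part grows by more than `2A + 2π` would have to cross one of them. This crossing is the
two-dimensional Poincaré–Miranda theorem, proved by following a continuous argument of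
`γ(s) - ℓ(t)` around the parameter rectangle: it would increase along all four sides.
Each `Vⱼ` is connected, so it lies in one (open, hence path-connected) component of `O`; thus the
`Vⱼ` have vertical extent at most `2A + 2π`, and `E_κ^p(U) = U` leaves only `p` of them.
-/

open Filter Complex Set
open scoped Real

theorem Complex.exists_continuous_exp_eq {A : Type*} [TopologicalSpace A] [SimplyConnectedSpace A]
    [LocallyPathConnectedSpace A] {f : A → ℂ} (hf : Continuous f) (hf0 : ∀ a, f a ≠ 0) :
    ∃ L : A → ℂ, Continuous L ∧ ∀ a, exp (L a) = f a := by
  obtain ⟨a₀⟩ := (inferInstance : Nonempty A)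
  obtain ⟨L, ⟨-, hL⟩, -⟩ := isCoveringMap_exp.existsUnique_continuousMap_lifts
    ⟨fun a => ⟨f a, hf0 a⟩, by fun_prop⟩ a₀ (log (f a₀)) (Subtype.ext (exp_log (hf0 a₀)))
  exact ⟨L, L.continuous, fun a => congrArg Subtype.val (congrFun hL a)⟩

theorem Convex.exists_continuousOn_exp_eq {E : Type*} [NormedAddCommGroup E] [NormedSpace ℝ E]
    {s : Set E} (hs : Convex ℝ s) {f : E → ℂ} (hf : ContinuousOn f s) (hf0 : ∀ x ∈ s, f x ≠ 0) :
    ∃ L : E → ℂ, ContinuousOn L s ∧ ∀ x ∈ s, exp (L x) = f x := by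
  rcases s.eq_empty_or_nonempty with rfl | hne
  · exact ⟨0, continuousOn_empty _, by simp⟩
  have := hs.contractibleSpace hne
  have := hs.locallyPathConnectedSpace
  obtain ⟨L, hLc, hL⟩ := exists_continuous_exp_eq (continuousOn_iff_continuous_domRestrict.1 hf)
    fun x => hf0 x x.2
  have hext : ∀ x : s, Function.extend Subtype.val L 0 x = L x :=
    Subtype.val_injective.extend_apply L 0
  refine ⟨Function.extend Subtype.val L 0, ?_, fun x hx => ?_⟩
  · rw [continuousOn_iff_continuous_domRestrict]
    exact hLc.congr fun x => (hext x).symm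
  · rw [hext ⟨x, hx⟩]
    exact hL ⟨x, hx⟩

theorem IsPreconnected.im_sub_arg_exp_eq {α : Type*} [TopologicalSpace α] {S : Set α}
    (hS : IsPreconnected S) {L : α → ℂ} (hL : ContinuousOn L S)
    (hslit : ∀ z ∈ S, exp (L z) ∈ slitPlane) {x y : α} (hx : x ∈ S) (hy : y ∈ S) :
    (L x).im - arg (exp (L x)) = (L y).im - arg (exp (L y)) := by
  refine hS.constant_of_mapsTo (f := fun z => (L z).im - arg (exp (L z)))
    (isDiscrete_iff_discreteTopology.2 (inferInstance :
      DiscreteTopology (AddSubgroup.zmultiples (2 * π)))) ?_ (fun z _ => ?_) hx hy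
  · refine (continuous_im.comp_continuousOn hL).sub fun z hz => ?_
    exact ((continuousAt_arg (hslit z hz)).comp continuous_exp.continuousAt).comp_continuousWithinAt
      (hL z hz)
  · dsimp only
    rw [SetLike.mem_coe, arg_exp, self_sub_toIocMod]
    exact AddSubgroup.zsmul_mem_zmultiples _ _

theorem IsPreconnected.im_lt_im_of_re_pos {α : Type*} [TopologicalSpace α] {S : Set α}
    (hS : IsPreconnected S) {L f : α → ℂ} (hL : ContinuousOn L S) (hLf : ∀ z ∈ S, exp (L z) = f z)
    {u : ℂ} (hre : ∀ z ∈ S, 0 < (u * f z).re) {x y : α} (hx : x ∈ S) (hy : y ∈ S)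
    (hxim : (u * f x).im < 0) (hyim : 0 < (u * f y).im) : (L x).im < (L y).im := by
  have hu : u ≠ 0 := by rintro rfl; simpa using hre x hx
  have hexp : ∀ z ∈ S, exp (L z + log u) = u * f z := fun z hz => by
    rw [exp_add, exp_log hu, hLf z hz, mul_comm]
  have hconst := hS.im_sub_arg_exp_eq (L := fun z => L z + log u) (hL.add continuousOn_const)
    (fun z hz => by rw [hexp z hz]; exact Or.inl (hre z hz)) hx hy
  simp only [hexp x hx, hexp y hy, add_im] at hconst
  have hxarg : arg (u * f x) < 0 := arg_neg_iff.2 hxim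
  have hyarg : 0 < arg (u * f y) :=
    (arg_nonneg_iff.2 hyim.le).lt_of_ne' fun h => hyim.ne' (arg_eq_zero_iff.1 h).2
  linarith

theorem exists_eq_zero_of_poincareMiranda {a b c d : ℝ} (hab : a ≤ b) (hcd : c ≤ d)
    {F : ℝ × ℝ → ℂ} (hF : ContinuousOn F (Icc a b ×ˢ Icc c d))
    (hbot : ∀ s ∈ Icc a b, 0 < (F (s, c)).re) (htop : ∀ s ∈ Icc a b, (F (s, d)).re < 0)
    (hleft : ∀ t ∈ Icc c d, (F (a, t)).im < 0) (hright : ∀ t ∈ Icc c d, 0 < (F (b, t)).im) :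
    ∃ x ∈ Icc a b ×ˢ Icc c d, F x = 0 := by
  by_contra! hF0
  obtain ⟨L, hLc, hLF⟩ := ((convex_Icc a b).prod (convex_Icc c d)).exists_continuousOn_exp_eq hF hF0
  have ha : a ∈ Icc a b := left_mem_Icc.2 hab
  have hb : b ∈ Icc a b := right_mem_Icc.2 hab
  have hc : c ∈ Icc c d := left_mem_Icc.2 hcd
  have hd : d ∈ Icc c d := right_mem_Icc.2 hcd
  have side {e : ℝ → ℝ × ℝ} (he : Continuous e) {α β : ℝ}
      (hmaps : MapsTo e (Icc α β) (Icc a b ×ˢ Icc c d)) {u : ℂ}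
      (hre : ∀ r ∈ Icc α β, 0 < (u * F (e r)).re) {x y : ℝ} (hx : x ∈ Icc α β) (hy : y ∈ Icc α β)
      (hxim : (u * F (e x)).im < 0) (hyim : 0 < (u * F (e y)).im) :
      (L (e x)).im < (L (e y)).im :=
    isPreconnected_Icc.im_lt_im_of_re_pos (hLc.comp he.continuousOn hmaps)
      (fun r hr => hLF _ (hmaps hr)) hre hx hy hxim hyim
  have h₁ : (L (a, c)).im < (L (b, c)).im :=
    side (e := (·, c)) (by fun_prop) (fun s hs => ⟨hs, hc⟩) (u := 1) (by simpa using hbot) ha hb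
      (by simpa using hleft c hc) (by simpa using hright c hc)
  have h₂ : (L (b, c)).im < (L (b, d)).im :=
    side (e := (b, ·)) (by fun_prop) (fun t ht => ⟨hb, ht⟩) (u := -I) (by simpa using hright)
      hc hd (by simpa using hbot b hb) (by simpa using htop b hb)
  have h₃ : (L (b, d)).im < (L (a, d)).im :=
    side (e := (·, d)) (by fun_prop) (fun s hs => ⟨hs, hd⟩) (u := -1) (by simpa using htop) hb ha
      (by simpa using hright d hd) (by simpa using hleft d hd)
  have h₄ : (L (a, d)).im < (L (a, c)).im :=
    side (e := (a, ·)) (by fun_prop) (fun t ht => ⟨ha, ht⟩) (u := I) (by simpa using hleft)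
      hd hc (by simpa using htop a ha) (by simpa using hbot a ha)
  linarith

theorem exists_eq_of_crossing {a b c d : ℝ} (hab : a ≤ b) (hcd : c ≤ d) {γ η : ℝ → ℂ}
    (hγ : ContinuousOn γ (Icc a b)) (hη : ContinuousOn η (Icc c d))
    (hleft : ∀ s ∈ Icc a b, (η c).re < (γ s).re) (hright : ∀ s ∈ Icc a b, (γ s).re < (η d).re)
    (hbot : ∀ t ∈ Icc c d, (γ a).im < (η t).im) (htop : ∀ t ∈ Icc c d, (η t).im < (γ b).im) :
    ∃ s ∈ Icc a b, ∃ t ∈ Icc c d, γ s = η t := by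
  obtain ⟨⟨s, t⟩, ⟨hs, ht⟩, h⟩ := exists_eq_zero_of_poincareMiranda (F := fun x => γ x.1 - η x.2)
    hab hcd ((hγ.comp continuousOn_fst fun x hx => hx.1).sub
      (hη.comp continuousOn_snd fun x hx => hx.2))
    (fun s hs => by simpa using hleft s hs) (fun s hs => by simpa using hright s hs)
    (fun t ht => by simpa using hbot t ht) (fun t ht => by simpa using htop t ht)
  exact ⟨s, hs, t, ht, sub_eq_zero.1 h⟩

theorem isClosed_image_Ici_of_tendsto_re {g : ℝ → ℂ} {a : ℝ} (hg : ContinuousOn g (Ici a))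
    (hre : Tendsto (fun t => (g t).re) atTop atTop) : IsClosed (g '' Ici a) := by
  refine isClosed_of_closure_subset fun x hx => ?_
  obtain ⟨T, hT⟩ := eventually_atTop.1 (hre.eventually_gt_atTop (x.re + 1))
  have hK : IsClosed (g '' Icc a T) :=
    (isCompact_Icc.image_of_continuousOn (hg.mono Icc_subset_Ici_self)).isClosed
  have hsub : g '' Ici a ⊆ g '' Icc a T ∪ {w | x.re + 1 ≤ w.re} := by
    rintro _ ⟨t, ht, rfl⟩
    rcases le_total t T with htT | hTt
    · exact Or.inl ⟨t, ⟨ht, htT⟩, rfl⟩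
    · exact Or.inr (hT t hTt).le
  rcases closure_minimal hsub (hK.union (isClosed_le continuous_const continuous_re)) hx with
    ⟨t, ht, rfl⟩ | hfar
  · exact ⟨t, ht.1, rfl⟩
  · exact absurd (show x.re + 1 ≤ x.re from hfar) (not_le.2 (lt_add_one _))

theorem exists_last_mem_frontier {X : Type*} [TopologicalSpace X] {f : ℝ → X} {a : ℝ}
    {C : Set X} (hf : ContinuousOn f (Ici a)) (hC : IsClosed C) (ha : f a ∈ C)
    (hev : ∀ᶠ t in atTop, f t ∉ C) : ∃ t₀ ≥ a, f t₀ ∈ frontier C ∧ ∀ t > t₀, f t ∉ C := by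
  obtain ⟨T, hT⟩ := eventually_atTop.1 hev
  set K := Ici a ∩ f ⁻¹' C
  have hKbdd : BddAbove K := ⟨T, fun t ht => not_lt.1 fun hTt => hT t hTt.le ht.2⟩
  have ht₀ : sSup K ∈ K :=
    (hf.preimage_isClosed_of_isClosed isClosed_Ici hC).csSup_mem ⟨a, mem_Ici.2 le_rfl, ha⟩ hKbdd
  have hafter : ∀ t > sSup K, f t ∉ C := fun t ht hft =>
    (le_csSup hKbdd ⟨ht₀.1.trans ht.le, hft⟩).not_gt ht
  refine ⟨sSup K, ht₀.1, ⟨subset_closure ht₀.2, ?_⟩, hafter⟩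
  rw [← mem_compl_iff, ← closure_compl]
  have hcont : ContinuousWithinAt f (Ioi (sSup K)) (sSup K) :=
    (hf _ ht₀.1).mono fun t (ht : sSup K < t) => mem_Ici.2 (ht₀.1.trans ht.le)
  refine closure_mono ?_ (hcont.mem_closure_image (by simp))
  rintro _ ⟨t, ht, rfl⟩
  exact hafter t ht

theorem tendsto_re_of_tendsto_re_exp {α : Type*} {l : Filter α} {L : α → ℂ}
    (h : Tendsto (fun t => (exp (L t)).re) l atTop) : Tendsto (fun t => (L t).re) l atTop := by
  have hexp : Tendsto (fun t => Real.exp (L t).re) l atTop :=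
    tendsto_atTop_mono (fun t => (norm_exp (L t)) ▸ re_le_norm _) h
  simpa [Function.comp_def] using Real.tendsto_log_atTop.comp hexp

theorem exists_abs_im_le_of_tendsto_re_exp {L : ℝ → ℂ} {a : ℝ} (hL : ContinuousOn L (Ici a))
    (h : Tendsto (fun t => (exp (L t)).re) atTop atTop) : ∃ A, ∀ t ≥ a, |(L t).im| ≤ A := by
  obtain ⟨T, hT⟩ := eventually_atTop.1 ((h.eventually_gt_atTop 0).and (eventually_ge_atTop a))
  obtain ⟨B, hB⟩ := isCompact_Icc.exists_bound_of_continuousOn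
    (continuous_im.comp_continuousOn (hL.mono (Icc_subset_Ici_self : Icc a T ⊆ _)))
  have hTS : T ∈ Ici T := mem_Ici.2 le_rfl
  refine ⟨max B (|(L T).im - arg (exp (L T))| + π), fun t ht => ?_⟩
  rcases le_total t T with htT | hTt
  · exact le_max_of_le_left (hB t ⟨ht, htT⟩)
  -- beyond `T`, `exp ∘ L` stays in the right half-plane, where `arg` is a continuous branch
  have hconst := isPreconnected_Ici.im_sub_arg_exp_eq (hL.mono (Ici_subset_Ici.2 (hT T le_rfl).2))
    (fun s hs => Or.inl (hT s hs).1) hTt hTS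
  refine le_max_of_le_right ?_
  calc |(L t).im| = |((L T).im - arg (exp (L T))) + arg (exp (L t))| := by
        rw [← hconst]; ring_nf
    _ ≤ |(L T).im - arg (exp (L T))| + |arg (exp (L t))| := abs_add_le _ _
    _ ≤ _ := by gcongr; exact abs_arg_le_pi _

theorem exists_log_tail {κ : ℂ} {δ : ℝ} (hδ : 0 < δ) {g : ℝ → ℂ} (hgc : ContinuousOn g (Ici 0))
    (hg0 : ‖g 0 - κ‖ ≤ δ) (hgre : Tendsto (fun t => (g t).re) atTop atTop) :
    ∃ t₀ ≥ 0, ∃ ℓ : ℝ → ℂ, ContinuousOn ℓ (Ici t₀) ∧ (∀ t ≥ t₀, exp (ℓ t) = g t - κ) ∧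
      (ℓ t₀).re = Real.log δ ∧ Tendsto (fun t => (ℓ t).re) atTop atTop ∧
      ∃ A, ∀ t ≥ t₀, |(ℓ t).im| ≤ A := by
  have hre : Tendsto (fun t => (g t - κ).re) atTop atTop := by
    simpa [sub_eq_add_neg] using tendsto_atTop_add_const_right _ (-κ.re) hgre
  have hmem : ∀ t, g t ∈ Metric.closedBall κ δ ↔ ‖g t - κ‖ ≤ δ := fun t => by
    rw [Metric.mem_closedBall, dist_eq_norm]
  obtain ⟨t₀, ht₀, hfr, hafter⟩ := exists_last_mem_frontier hgc Metric.isClosed_closedBall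
    ((hmem 0).2 hg0) ((hre.eventually_gt_atTop δ).mono fun t ht => by
      rw [hmem, not_le]; exact ht.trans_le (re_le_norm _))
  rw [frontier_closedBall κ hδ.ne', mem_sphere_iff_norm] at hfr
  have hnorm : ∀ t ≥ t₀, δ ≤ ‖g t - κ‖ := fun t ht => by
    rcases ht.eq_or_lt with rfl | ht
    · exact hfr.ge
    · exact (not_le.1 ((hmem t).not.1 (hafter t ht))).le
  obtain ⟨ℓ, hℓc, hℓ⟩ := (convex_Ici t₀).exists_continuousOn_exp_eq (f := fun t => g t - κ)
    ((hgc.mono (Ici_subset_Ici.2 ht₀)).sub continuousOn_const)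
    fun t ht => norm_pos_iff.1 (hδ.trans_le (hnorm t ht))
  have hexpre : Tendsto (fun t => (exp (ℓ t)).re) atTop atTop :=
    hre.congr' ((eventually_ge_atTop t₀).mono fun t ht => congrArg re (hℓ t ht).symm)
  refine ⟨t₀, ht₀, ℓ, hℓc, hℓ, ?_, tendsto_re_of_tendsto_re_exp hexpre,
    exists_abs_im_le_of_tendsto_re_exp hℓc hexpre⟩
  rw [← hfr, ← hℓ t₀ (mem_Ici.2 le_rfl), norm_exp, Real.log_exp]

theorem im_sub_le_of_joinedIn {O : Set ℂ} {c A t₀ : ℝ} {ℓ : ℝ → ℂ}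
    (hℓ : ContinuousOn ℓ (Ici t₀)) (hℓ₀ : (ℓ t₀).re ≤ c)
    (hre : Tendsto (fun t => (ℓ t).re) atTop atTop) (him : ∀ t ≥ t₀, |(ℓ t).im| ≤ A)
    (hOre : ∀ y ∈ O, c < y.re) (hOℓ : ∀ t ≥ t₀, ∀ n : ℤ, ℓ t + n * (2 * π * I) ∉ O)
    {z z' : ℂ} (h : JoinedIn O z z') : z'.im - z.im ≤ 2 * A + 2 * π := by
  by_contra! hzz
  obtain ⟨γ, hγO⟩ := h
  have hγO' : ∀ s, γ.extend s ∈ O := fun s => by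
    obtain ⟨u, hu⟩ : γ.extend s ∈ range γ := γ.extend_range ▸ mem_range_self s
    exact hu ▸ hγO u
  obtain ⟨R, hR⟩ := (isCompact_range γ.continuous).exists_bound_of_continuousOn
    continuous_re.continuousOn
  have hγR : ∀ s, (γ.extend s).re ≤ R := fun s =>
    (le_abs_self _).trans (hR _ (γ.extend_range ▸ mem_range_self s))
  -- `n` is chosen so that the strip containing `ℓ + 2πin` lies strictly between `z` and `z'`
  set n : ℤ := ⌊(z.im + A) / (2 * π)⌋ + 1
  have hn₁ : z.im + A < 2 * π * n := by
    have := Int.lt_floor_add_one ((z.im + A) / (2 * π))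
    rw [div_lt_iff₀ (by positivity)] at this
    push_cast [n]; linarith
  have hn₂ : 2 * π * n ≤ z.im + A + 2 * π := by
    have := Int.floor_le ((z.im + A) / (2 * π))
    rw [le_div_iff₀ (by positivity)] at this
    push_cast [n]; linarith
  obtain ⟨T, hRT, hT⟩ := ((hre.eventually_gt_atTop R).and (eventually_ge_atTop t₀)).exists
  have hℓA : ∀ t ∈ Icc t₀ T, -A ≤ (ℓ t).im ∧ (ℓ t).im ≤ A := fun t ht => abs_le.1 (him t ht.1)
  have hηim : ∀ t, (ℓ t + n * (2 * π * I)).im = (ℓ t).im + 2 * π * n := fun t => by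
    simp [mul_comm]
  obtain ⟨s, -, t, ht, hst⟩ := exists_eq_of_crossing zero_le_one hT
    γ.continuous_extend.continuousOn ((hℓ.mono Icc_subset_Ici_self).add continuousOn_const)
    (η := fun t => ℓ t + n * (2 * π * I))
    (fun s _ => by simpa using hℓ₀.trans_lt (hOre _ (hγO' s)))
    (fun s _ => by simpa using (hγR s).trans_lt hRT)
    (fun t ht => by rw [γ.extend_zero, hηim]; linarith [hℓA t ht])
    (fun t ht => by rw [γ.extend_one, hηim]; linarith [hℓA t ht])
  exact hOℓ t ht.1 n (hst ▸ hγO' s)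

theorem IsPreconnected.joinedIn_of_subset_isOpen {X : Type*} [TopologicalSpace X]
    [LocallyPathConnectedSpace X] {V O : Set X} (hV : IsPreconnected V) (hO : IsOpen O)
    (hVO : V ⊆ O) {x y : X} (hx : x ∈ V) (hy : y ∈ V) : JoinedIn O x y := by
  have hC : IsPathConnected (_root_.connectedComponentIn O x) :=
    hO.connectedComponentIn.isConnected_iff_isPathConnected.1
      (isConnected_connectedComponentIn_iff.2 (hVO hx))
  have hVC := hV.subset_connectedComponentIn hx hVO
  exact (hC.joinedIn x (hVC hx) y (hVC hy)).mono (connectedComponentIn_subset O x)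

theorem iterate_image_subset_preimage_compl {X : Type*} {f : X → X} {U B : Set X}
    (h : ∀ j, Disjoint (f^[j] '' U) B) (j : ℕ) : f^[j] '' U ⊆ f ⁻¹' Bᶜ := by
  rintro _ ⟨u, hu, rfl⟩ hB
  exact disjoint_left.1 (h (j + 1)) ⟨u, hu, Function.iterate_succ_apply' f j u⟩ hB

theorem iterate_image_eq_mod {X : Type*} {f : X → X} {U : Set X} {p : ℕ}
    (hper : f^[p] '' U = U) (j : ℕ) : f^[j] '' U = f^[j % p] '' U := by
  conv_lhs => rw [← Nat.mod_add_div j p, Function.iterate_add, image_comp,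
    Function.iterate_mul, image_iterate_eq (f := f^[p]), Function.iterate_fixed hper]

theorem exists_abs_lt_of_iterate_image_periodic {X : Type*} {f : X → X} {U : Set X}
    (hU : U.Nonempty) {p : ℕ} (hp : 1 ≤ p) (hper : f^[p] '' U = U) {φ : X → ℝ} {M : ℝ}
    (hosc : ∀ j, ∀ x ∈ f^[j] '' U, ∀ y ∈ f^[j] '' U, φ y - φ x ≤ M) :
    ∃ S > 0, ∀ j, ∀ x ∈ f^[j] '' U, |φ x| < S := by
  obtain ⟨u, hu⟩ := hU
  set B := ∑ i ∈ Finset.range p, |φ (f^[i] u)|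
  refine ⟨B + |M| + 1, by positivity, fun j x hx => ?_⟩
  rw [iterate_image_eq_mod hper] at hx
  have hu' : f^[j % p] u ∈ f^[j % p] '' U := mem_image_of_mem _ hu
  have hB : |φ (f^[j % p] u)| ≤ B := Finset.single_le_sum (f := fun i => |φ (f^[i] u)|)
    (fun i _ => abs_nonneg _) (Finset.mem_range.2 (Nat.mod_lt j hp))
  have h₁ := hosc _ _ hu' _ hx
  have h₂ := hosc _ _ hx _ hu'
  rw [abs_lt]
  constructor <;> linarith [abs_le.1 hB, le_abs_self M, neg_abs_le (φ (f^[j % p] u))]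

theorem forward_images_have_bdd_im_general (κ : ℂ) (δ : ℝ) (hδ : 0 < δ)
    (U : Set ℂ) (hUne : U.Nonempty) (hUconn : IsConnected U)
    (p : ℕ) (hp : 1 ≤ p) (hper : (fun z => Complex.exp z + κ)^[p] '' U = U)
    (g : ℝ → ℂ) (hgc : ContinuousOn g (Set.Ici 0))
    (hg0 : ‖g 0 - κ‖ ≤ δ)
    (hgre : Tendsto (fun t => (g t).re) atTop atTop)
    (hdisj : ∀ j : ℕ,
      Disjoint ((fun z => Complex.exp z + κ)^[j] '' U)
        ({w : ℂ | ‖w - κ‖ ≤ δ} ∪ g '' Set.Ici (0 : ℝ))) :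
    ∃ S > 0, ∀ j : ℕ, ∀ z ∈ (fun z => Complex.exp z + κ)^[j] '' U, |z.im| < S := by
  obtain ⟨t₀, ht₀, ℓ, hℓc, hℓ, hℓ₀, hre, A, hA⟩ := exists_log_tail hδ hgc hg0 hgre
  set B := {w : ℂ | ‖w - κ‖ ≤ δ} ∪ g '' Set.Ici (0 : ℝ)
  set O := (fun z => exp z + κ) ⁻¹' Bᶜ
  have hO : IsOpen O :=
    ((isClosed_le (by fun_prop) continuous_const).union
      (isClosed_image_Ici_of_tendsto_re hgc hgre)).isOpen_compl.preimage (by fun_prop)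
  have hOre : ∀ y ∈ O, Real.log δ < y.re := fun y hy => by
    have : δ < ‖exp y‖ := by simpa using fun h => hy (Or.inl h)
    rwa [norm_exp, ← Real.log_lt_iff_lt_exp hδ] at this
  have hOℓ : ∀ t ≥ t₀, ∀ n : ℤ, ℓ t + n * (2 * π * I) ∉ O :=
    fun t ht n hO => hO (Or.inr ⟨t, ht₀.trans ht, by simp [exp_add, hℓ t ht]⟩)
  refine exists_abs_lt_of_iterate_image_periodic hUne hp hper (φ := im) fun j z hz z' hz' =>
    im_sub_le_of_joinedIn hℓc hℓ₀.le hre hA hOre hOℓ ?_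
  have hcont : Continuous (fun z => exp z + κ)^[j] := (by fun_prop : Continuous _).iterate j
  exact (hUconn.image _ hcont.continuousOn).isPreconnected.joinedIn_of_subset_isOpen hO
    (iterate_image_subset_preimage_compl hdisj j) hz hz'

/-- If `U` is a nonempty connected set periodic under `E_κ(z) = exp z + κ` whose forward
images avoid a closed disk around `κ` and a curve `g` going to `+∞` with bounded
imaginary part, then the forward images of `U` have uniformly bounded imaginary part. -/
theorem forward_images_have_bdd_im (κ : ℂ) (δ : ℝ) (hδ : 0 < δ)
    (U : Set ℂ) (hUne : U.Nonempty) (hUconn : IsConnected U)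
    (p : ℕ) (hp : 1 ≤ p) (hper : (fun z => Complex.exp z + κ)^[p] '' U = U)
    (g : ℝ → ℂ) (hgc : ContinuousOn g (Set.Ici 0))
    (hg0 : ‖g 0 - κ‖ ≤ δ)
    (hgre : Tendsto (fun t => (g t).re) atTop atTop)
    (hgim : ∃ C : ℝ, ∀ t ∈ Set.Ici (0 : ℝ), |(g t).im| ≤ C)
    (hdisj : ∀ j : ℕ,
      Disjoint ((fun z => Complex.exp z + κ)^[j] '' U)
        ({w : ℂ | ‖w - κ‖ ≤ δ} ∪ g '' Set.Ici (0 : ℝ))) :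
    ∃ S > 0, ∀ j : ℕ, ∀ z ∈ (fun z => Complex.exp z + κ)^[j] '' U, |z.im| < S :=
  forward_images_have_bdd_im_general κ δ hδ U hUne hUconn p hp hper g hgc hg0 hgre hdisj
end
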